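/- arXiv:1512.07556 — 2 statements merged into one kernel-verified Lean document; each statement's English description precedes it below -/
import Mathlib

section
/- Fix a root generating system (C, X, Y, (α_i)_{i∈I}, (α_i^∨)_{i∈I}). Let Y^{++} = {y ∈ Y | α_i(y) ≥ 0 for all i ∈ I}, let V_in = ∩_{i∈I} ker(α_i) ⊆ V, let Y_{≻0} = Y^{++} \ V_in, and let 𝒫 = {a ∈ Y_{≻0} | a ≠ b + c for all b, c ∈ Y_{≻0}}. Then the set {(α_i(a))_{i∈I} : a ∈ 𝒫} ⊆ ℕ^I is finite. -/
/-- A root generating system: a Kac–Moody (generalized Cartan) matrix `c` indexed by a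
finite set `I`, a cocharacter lattice `Y` (a finitely generated — hence free, being
torsion free — `ℤ`-submodule of `V = Y ⊗ ℝ`, spanning `V` over `ℝ`), simple roots
`α i` (elements of `X`, viewed as linear forms on `V`, hence integral on `Y`) and
simple coroots `coroot i ∈ Y`, with `α j (coroot i) = c i j`, both families being
linearly independent. -/
structure RootGenSys (I : Type) (V : Type) [Fintype I] [AddCommGroup V] [Module ℝ V] where
  c : I → I → ℤ
  Y : Submodule ℤ V
  α : I → V →ₗ[ℝ] ℝ
  coroot : I → V
  cartan_diag : ∀ i, c i i = 2
  cartan_offdiag : ∀ i j, i ≠ j → c i j ≤ 0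
  cartan_zero_iff : ∀ i j, c i j = 0 ↔ c j i = 0
  pairing : ∀ i j, α j (coroot i) = (c i j : ℝ)
  coroot_mem : ∀ i, coroot i ∈ Y
  α_int : ∀ i, ∀ y ∈ Y, ∃ m : ℤ, α i y = (m : ℝ)
  α_indep : LinearIndependent ℤ α
  coroot_indep : LinearIndependent ℤ coroot
  Y_fg : Y.FG
  Y_span : Submodule.span ℝ (Y : Set V) = ⊤

namespace RootGenSys

variable {I V : Type} [Fintype I] [AddCommGroup V] [Module ℝ V]

/-- `Y^{++} = Y ∩ C̄_f^v = {y ∈ Y | α i (y) ≥ 0 for all i}`. -/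
def Ypp (rgs : RootGenSys I V) : Set V :=
  {y | y ∈ rgs.Y ∧ ∀ i, 0 ≤ rgs.α i y}

/-- The inessential part `V_in = ∩_i ker (α i)`. -/
def Vin (rgs : RootGenSys I V) : Set V :=
  {v | ∀ i, rgs.α i v = 0}

/-- `Y_{≻0} = Y^{++} \ V_in`. -/
def Ysucc (rgs : RootGenSys I V) : Set V :=
  rgs.Ypp \ rgs.Vin

/-- `𝒫 = {a ∈ Y_{≻0} | a ≠ b + c for all b, c ∈ Y_{≻0}}`. -/
def Pirr (rgs : RootGenSys I V) : Set V :=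
  {a | a ∈ rgs.Ysucc ∧ ∀ b ∈ rgs.Ysucc, ∀ c ∈ rgs.Ysucc, a ≠ b + c}

end RootGenSys

/-- For a root generating system, the set `{(α_i(a))_{i ∈ I} | a ∈ 𝒫} ⊆ ℕ^I` is finite,
where `𝒫` is the set of elements of `Y_{≻0} = Y^{++} \ V_in` that are not the sum of two
elements of `Y_{≻0}`. -/
theorem finite_alpha_image_of_Pirr {I V : Type} [Fintype I] [AddCommGroup V] [Module ℝ V]
    (rgs : RootGenSys I V) :
    {f : I → ℝ | ∃ a ∈ rgs.Pirr, f = fun i => rgs.α i a}.Finite := by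
  -- The set of natural-number vectors attached to elements of 𝒫
  set G : Set (I → ℕ) := {g | ∃ a ∈ rgs.Pirr, ∀ i, ((g i : ℝ)) = rgs.α i a} with hG
  -- G is an antichain for the pointwise order
  have hanti : IsAntichain (· ≤ ·) G := by
    intro g₁ hg₁ g₂ hg₂ hne hle
    obtain ⟨a, ha, hga⟩ := hg₁
    obtain ⟨b, hb, hgb⟩ := hg₂
    have haY : a ∈ rgs.Ysucc := ha.1
    have hbY : b ∈ rgs.Ysucc := hb.1
    have hbaY : b - a ∈ rgs.Y := Submodule.sub_mem _ hbY.1.1 haY.1.1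
    have hba_nonneg : ∀ i, 0 ≤ rgs.α i (b - a) := by
      intro i
      have : rgs.α i (b - a) = (g₂ i : ℝ) - (g₁ i : ℝ) := by
        rw [map_sub, hga, hgb]
      rw [this]
      have := hle i
      simp only [sub_nonneg]
      exact_mod_cast this
    have hba_nin : b - a ∉ rgs.Vin := by
      intro hin
      apply hne
      funext i
      have h0 : rgs.α i (b - a) = 0 := hin i
      rw [map_sub, ← hga, ← hgb] at h0
      have : (g₁ i : ℝ) = (g₂ i : ℝ) := by linarith
      exact_mod_cast this
    have hba : b - a ∈ rgs.Ysucc := ⟨⟨hbaY, hba_nonneg⟩, hba_nin⟩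
    exact hb.2 a haY (b - a) hba (by abel)
  have hpwo : G.IsPWO := by
    exact Set.isPWO_of_wellQuasiOrderedLE G
  have hGfin : G.Finite := hanti.finite_of_partiallyWellOrderedOn hpwo
  -- The target set is the image of G under coercion
  have hsub : {f : I → ℝ | ∃ a ∈ rgs.Pirr, f = fun i => rgs.α i a} ⊆
      (fun g : I → ℕ => fun i => (g i : ℝ)) '' G := by
    rintro f ⟨a, ha, rfl⟩
    have haY : a ∈ rgs.Y := ha.1.1.1
    have hpos : ∀ i, 0 ≤ rgs.α i a := ha.1.1.2
    choose m hm using fun i => rgs.α_int i a haY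
    refine ⟨fun i => (m i).toNat, ⟨a, ha, fun i => ?_⟩, ?_⟩
    · have hm0 : 0 ≤ m i := by
        have := hpos i; rw [hm i] at this; exact_mod_cast this
      rw [hm i]
      exact_mod_cast Int.toNat_of_nonneg hm0
    · funext i
      have hm0 : 0 ≤ m i := by
        have := hpos i; rw [hm i] at this; exact_mod_cast this
      show (((m i).toNat : ℕ) : ℝ) = rgs.α i a
      rw [hm i]
      exact_mod_cast Int.toNat_of_nonneg hm0
  exact (hGfin.image _).subset hsub
end

section
/- Fix a root generating system. Let T ∈ ℝ_{≥0}, μ ∈ V, a ∈ V and ν ∈ Y^{++}, and suppose there exists a Hecke path π of shape Tν with respect to −C_f^v with π(0) = a and π(1) = a + Tν − μ. Then μ ∈ Q^∨_{ℝ+} = Σ_{i∈I} ℝ_{≥0} α_i^∨. -/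
namespace RootGenSys

variable {I V : Type} [Fintype I] [AddCommGroup V] [Module ℝ V]

/-- The fundamental reflection `r i : v ↦ v - α i (v) • coroot i`. -/
noncomputable def refl (rgs : RootGenSys I V) (i : I) : V ≃ₗ[ℝ] V :=
  Module.reflection (f := rgs.α i) (x := rgs.coroot i)
    (by rw [rgs.pairing, rgs.cartan_diag]; norm_num)

/-- The (vectorial) Weyl group `W^v ⊆ GL(V)`, generated by the fundamental
reflections `r i`, `i ∈ I`. -/
def weylGroup (rgs : RootGenSys I V) : Subgroup (V ≃ₗ[ℝ] V) :=
  Subgroup.closure (Set.range rgs.refl)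

/-- A `W^v_{pt}`-chain from `ξm` to `ξp`: a finite sequence
`ξ 0 = ξm, ξ 1, …, ξ s = ξp` in `V` together with pairs `(w j, ind j) ∈ W^v × I`,
where, writing `β j = (w j) · α (ind j) : x ↦ α (ind j) ((w j)⁻¹ x)`, for every `j`:
(1) `(w j) ∘ r (ind j) ∘ (w j)⁻¹` maps `ξ (j-1)` to `ξ j`;
(2) `β j (ξ (j-1)) < 0`;
(3) `β j (pt) ∈ ℤ` (i.e. `pt` lies in a wall of direction `ker (β j)`);
(4) `β j > 0` on the fundamental chamber `C_f^v` (positivity w.r.t. `-C_f^v`). -/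
def IsHeckeChain (rgs : RootGenSys I V) (pt ξm ξp : V) : Prop :=
  ∃ (s : ℕ) (ξ : Fin (s + 1) → V) (w : Fin s → (V ≃ₗ[ℝ] V)) (ind : Fin s → I),
    ξ 0 = ξm ∧ ξ (Fin.last s) = ξp ∧
    ∀ j : Fin s,
      w j ∈ rgs.weylGroup ∧
      (w j * rgs.refl (ind j) * (w j)⁻¹) (ξ j.castSucc) = ξ j.succ ∧
      rgs.α (ind j) ((w j)⁻¹ (ξ j.castSucc)) < 0 ∧
      (∃ m : ℤ, rgs.α (ind j) ((w j)⁻¹ pt) = (m : ℝ)) ∧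
      (∀ v : V, (∀ i, 0 < rgs.α i v) → 0 < rgs.α (ind j) ((w j)⁻¹ v))

/-- A Hecke path of shape `lam` with respect to `-C_f^v`: a continuous piecewise linear
path `π : [0,1] → V`, given by a subdivision `0 = t 0 < t 1 < … < t n = 1` and segment
derivatives `v j` lying in the orbit `W^v · lam`, such that at each interior breakpoint
`t j` (`0 < j < n`) there is a `W^v_{π (t j)}`-chain from the left derivative `v (j-1)`
to the right derivative `v j`.  (At every other `t ∈ (0,1)` the path is differentiable,
`π'_-(t) = π'_+(t)`, and the chain condition holds trivially with `s = 0`, so this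
is exactly the condition "for each `t ∈ (0,1)`" of the usual definition.) -/
def IsHeckePath (rgs : RootGenSys I V) (lam : V) (π : ℝ → V) : Prop :=
  ∃ (n : ℕ) (t : Fin (n + 1) → ℝ) (v : Fin n → V),
    StrictMono t ∧ t 0 = 0 ∧ t (Fin.last n) = 1 ∧
    (∀ j : Fin n, ∀ s ∈ Set.Icc (t j.castSucc) (t j.succ),
        π s = π (t j.castSucc) + (s - t j.castSucc) • v j) ∧
    (∀ j : Fin n, ∃ w ∈ rgs.weylGroup, v j = w lam) ∧
    (∀ j : ℕ, ∀ _hj0 : 0 < j, ∀ hjn : j < n,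
        IsHeckeChain rgs (π (t ⟨j, by omega⟩)) (v ⟨j - 1, by omega⟩) (v ⟨j, hjn⟩))

end RootGenSys

namespace RootGenSys
variable {I V : Type} [Fintype I] [AddCommGroup V] [Module ℝ V]
variable (rgs : RootGenSys I V)


lemma refl_apply (i : I) (v : V) : rgs.refl i v = v - rgs.α i v • rgs.coroot i :=
  Module.reflection_apply _ _

lemma refl_mul_self (i : I) : rgs.refl i * rgs.refl i = 1 := by
  ext v
  have : rgs.refl i (rgs.refl i v) = v :=
    Module.involutive_reflection (by rw [rgs.pairing, rgs.cartan_diag]; norm_num) v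
  simpa using this

lemma refl_inv (i : I) : (rgs.refl i)⁻¹ = rgs.refl i :=
  inv_eq_of_mul_eq_one_left (rgs.refl_mul_self i)

lemma refl_mem (i : I) : rgs.refl i ∈ rgs.weylGroup :=
  Subgroup.subset_closure ⟨i, rfl⟩

/-- product of reflections along a word -/
noncomputable def word (l : List I) : V ≃ₗ[ℝ] V := (l.map rgs.refl).prod

@[simp] lemma word_nil : rgs.word [] = 1 := rfl

@[simp] lemma word_cons (i : I) (l : List I) :
    rgs.word (i :: l) = rgs.refl i * rgs.word l := by
  simp [word]

lemma word_append (l₁ l₂ : List I) :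
    rgs.word (l₁ ++ l₂) = rgs.word l₁ * rgs.word l₂ := by
  simp [word]

lemma word_concat (l : List I) (i : I) :
    rgs.word (l ++ [i]) = rgs.word l * rgs.refl i := by
  simp [word_append, word]

lemma word_mem (l : List I) : rgs.word l ∈ rgs.weylGroup := by
  induction l with
  | nil => exact Subgroup.one_mem _
  | cons i l ih => rw [word_cons]; exact Subgroup.mul_mem _ (rgs.refl_mem i) ih

lemma word_reverse (l : List I) : rgs.word l.reverse = (rgs.word l)⁻¹ := by
  induction l with
  | nil => simp
  | cons i l ih =>
      rw [List.reverse_cons, word_concat, ih, word_cons, mul_inv_rev, rgs.refl_inv]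

lemma exists_word {w : V ≃ₗ[ℝ] V} (hw : w ∈ rgs.weylGroup) : ∃ l : List I, rgs.word l = w := by
  induction hw using Subgroup.closure_induction with
  | mem x hx => obtain ⟨i, rfl⟩ := hx; exact ⟨[i], by simp [word]⟩
  | one => exact ⟨[], rfl⟩
  | mul x y _ _ hx hy =>
      obtain ⟨l₁, rfl⟩ := hx; obtain ⟨l₂, rfl⟩ := hy
      exact ⟨l₁ ++ l₂, rgs.word_append l₁ l₂⟩
  | inv x _ hx =>
      obtain ⟨l, rfl⟩ := hx
      exact ⟨l.reverse, rgs.word_reverse l⟩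

/-- length of an element w.r.t. words of reflections -/
noncomputable def len (w : V ≃ₗ[ℝ] V) : ℕ :=
  sInf {k | ∃ l : List I, l.length = k ∧ rgs.word l = w}

lemma exists_reduced {w : V ≃ₗ[ℝ] V} (hw : w ∈ rgs.weylGroup) :
    ∃ l : List I, rgs.word l = w ∧ l.length = rgs.len w := by
  obtain ⟨l₀, hl₀⟩ := rgs.exists_word hw
  have hne : {k | ∃ l : List I, l.length = k ∧ rgs.word l = w}.Nonempty := ⟨_, l₀, rfl, hl₀⟩
  obtain ⟨l, hl, hw'⟩ := Nat.sInf_mem hne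
  exact ⟨l, hw', hl⟩

lemma len_le (l : List I) : rgs.len (rgs.word l) ≤ l.length :=
  Nat.sInf_le ⟨l, rfl, rfl⟩

lemma len_mul_word_le {w : V ≃ₗ[ℝ] V} (hw : w ∈ rgs.weylGroup) (l : List I) :
    rgs.len (w * rgs.word l) ≤ rgs.len w + l.length := by
  obtain ⟨l₀, rfl, hlen⟩ := rgs.exists_reduced hw
  calc rgs.len (rgs.word l₀ * rgs.word l) = rgs.len (rgs.word (l₀ ++ l)) := by
        rw [word_append]
    _ ≤ (l₀ ++ l).length := rgs.len_le _
    _ = rgs.len (rgs.word l₀) + l.length := by simp [hlen]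

lemma eq_one_of_len_eq_zero {w : V ≃ₗ[ℝ] V} (hw : w ∈ rgs.weylGroup) (h : rgs.len w = 0) :
    w = 1 := by
  obtain ⟨l, hl, hlen⟩ := rgs.exists_reduced hw
  rw [h] at hlen
  rw [List.length_eq_zero_iff] at hlen
  rw [hlen] at hl
  simpa using hl.symm

end RootGenSys

namespace RootGenSys
variable {I V : Type} [Fintype I] [AddCommGroup V] [Module ℝ V] (rgs : RootGenSys I V)

include rgs in
lemma finiteDimensional : FiniteDimensional ℝ V := by
  obtain ⟨S, hS⟩ := rgs.Y_fg
  have h1 : Submodule.span ℝ (S : Set V) = ⊤ := by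
    refine le_antisymm le_top ?_
    rw [← rgs.Y_span, Submodule.span_le]
    intro y hy
    have hy' : y ∈ Submodule.span ℤ (S : Set V) := hS ▸ hy
    have h2 : Submodule.span ℤ (S : Set V) ≤
        (Submodule.span ℝ (S : Set V)).restrictScalars ℤ :=
      Submodule.span_le.2 (Submodule.subset_span (R := ℝ))
    exact h2 hy'
  exact Module.Finite.of_surjective
    (Finsupp.linearCombination ℝ (fun s : S => (s : V)))
    (by rw [← LinearMap.range_eq_top, Finsupp.range_linearCombination]
        simp [Set.range, ← h1])

lemma det_refl (i : I) : LinearMap.det (rgs.refl i).toLinearMap = -1 := by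
  classical
  have : FiniteDimensional ℝ V := rgs.finiteDimensional
  set f := rgs.α i
  set x := rgs.coroot i
  have h : f x = 2 := by rw [rgs.pairing, rgs.cartan_diag]; norm_num
  let b : Module.Basis (Fin (Module.finrank ℝ V)) ℝ V := Module.finBasis ℝ V
  have hrefl : (rgs.refl i).toLinearMap = LinearMap.id - f.smulRight x := rfl
  rw [hrefl, ← LinearMap.det_toMatrix b, map_sub, LinearMap.toMatrix_id]
  have hM : LinearMap.toMatrix b b (f.smulRight x) =
      Matrix.replicateCol (Fin 1) (fun j => b.repr x j) * Matrix.replicateRow (Fin 1) (fun j => f (b j)) := by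
    ext k j
    simp [LinearMap.toMatrix_apply, Matrix.mul_apply, Matrix.replicateCol, Matrix.replicateRow, mul_comm]
  rw [hM, Matrix.det_one_sub_mul_comm]
  have h2 : Matrix.replicateRow (Fin 1) (fun j => f (b j)) * Matrix.replicateCol (Fin 1) (fun j => b.repr x j) =
      Matrix.of (fun _ _ : Fin 1 => (2 : ℝ)) := by
    ext k j
    have hsum : ∑ k, f (b k) * b.repr x k = f x := by
      conv_rhs => rw [← b.sum_repr x]
      rw [map_sum]
      exact Finset.sum_congr rfl fun k _ => by rw [map_smul, smul_eq_mul, mul_comm]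
    simp [Matrix.mul_apply, Matrix.replicateRow, Matrix.replicateCol, hsum, h]
  rw [h2, Matrix.det_unique]
  norm_num

lemma det_word (l : List I) :
    LinearMap.det (rgs.word l).toLinearMap = (-1 : ℝ) ^ l.length := by
  induction l with
  | nil => simp [word]
  | cons i l ih =>
      rw [word_cons]
      have : ((rgs.refl i * rgs.word l : V ≃ₗ[ℝ] V)).toLinearMap
          = (rgs.refl i).toLinearMap * (rgs.word l).toLinearMap := rfl
      rw [this, map_mul, ih, rgs.det_refl i]
      rw [List.length_cons]
      ring

lemma det_eq_pow_len {w : V ≃ₗ[ℝ] V} (hw : w ∈ rgs.weylGroup) :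
    LinearMap.det w.toLinearMap = (-1 : ℝ) ^ rgs.len w := by
  obtain ⟨l, rfl, hlen⟩ := rgs.exists_reduced hw
  rw [rgs.det_word, hlen]

lemma len_mul_refl_ne {w : V ≃ₗ[ℝ] V} (hw : w ∈ rgs.weylGroup) (i : I) :
    rgs.len (w * rgs.refl i) ≠ rgs.len w := by
  intro hcon
  have h1 := rgs.det_eq_pow_len (Subgroup.mul_mem _ hw (rgs.refl_mem i))
  have h2 := rgs.det_eq_pow_len hw
  have h3 : ((w * rgs.refl i : V ≃ₗ[ℝ] V)).toLinearMap
      = w.toLinearMap * (rgs.refl i).toLinearMap := rfl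
  rw [h3, map_mul, h2, rgs.det_refl i, hcon] at h1
  have hne := pow_ne_zero (rgs.len w) (by norm_num : (-1 : ℝ) ≠ 0)
  have h4 : (-1 : ℝ) ^ rgs.len w = 0 := by linarith
  exact hne h4

/-- the nonnegative span of the coroots -/
def inQ (v : V) : Prop := ∃ x : I → ℝ, (∀ i, 0 ≤ x i) ∧ v = ∑ i, x i • rgs.coroot i

lemma inQ_zero : rgs.inQ 0 := ⟨0, fun _ => le_refl _, by simp⟩

lemma inQ_coroot (i : I) : rgs.inQ (rgs.coroot i) := by
  classical
  exact ⟨fun j => if j = i then 1 else 0, fun j => by positivity, by simp⟩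

lemma inQ_add {v w : V} (hv : rgs.inQ v) (hw : rgs.inQ w) : rgs.inQ (v + w) := by
  obtain ⟨x, hx, rfl⟩ := hv; obtain ⟨y, hy, rfl⟩ := hw
  exact ⟨x + y, fun i => add_nonneg (hx i) (hy i), by
    rw [← Finset.sum_add_distrib]; simp [add_smul]⟩

lemma inQ_smul {v : V} {r : ℝ} (hr : 0 ≤ r) (hv : rgs.inQ v) : rgs.inQ (r • v) := by
  obtain ⟨x, hx, rfl⟩ := hv
  exact ⟨fun i => r * x i, fun i => mul_nonneg hr (hx i), by
    rw [Finset.smul_sum]; simp [smul_smul]⟩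

lemma inQ_comb {v w : V} {p q : ℝ} (hp : 0 ≤ p) (hq : 0 ≤ q) (hv : rgs.inQ v) (hw : rgs.inQ w) :
    rgs.inQ (p • v + q • w) :=
  rgs.inQ_add (rgs.inQ_smul hp hv) (rgs.inQ_smul hq hw)

end RootGenSys

namespace RootGenSys
variable {I V : Type} [Fintype I] [AddCommGroup V] [Module ℝ V] (rgs : RootGenSys I V)

lemma pairing_diag (i : I) : rgs.α i (rgs.coroot i) = 2 := by
  rw [rgs.pairing, rgs.cartan_diag]; norm_num

/-- alternating word of given length over `{s,t}`, ending with `t` -/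
def aw (s t : I) : ℕ → List I
  | 0 => []
  | (k+1) => (if Even k then t else s) :: aw s t k

@[simp] lemma aw_length (s t : I) (k : ℕ) : (aw s t k).length = k := by
  induction k with
  | zero => rfl
  | succ k ih => simp [aw, ih]

lemma aw_letters (s t : I) (k : ℕ) : ∀ x ∈ aw s t k, x = s ∨ x = t := by
  induction k with
  | zero => simp [aw]
  | succ k ih =>
      intro x hx
      rw [aw] at hx
      rcases List.mem_cons.1 hx with h | h
      · subst h; split <;> simp
      · exact ih x h

lemma aw_suffix (s t : I) : ∀ k d, d ≤ k → ∃ p : List I,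
    aw s t k = p ++ aw s t d ∧ p.length = k - d := by
  intro k
  induction k with
  | zero => intro d hd; interval_cases d; exact ⟨[], rfl, rfl⟩
  | succ k ih =>
      intro d hd
      rcases Nat.lt_or_ge d (k+1) with h | h
      · obtain ⟨p, hp, hpl⟩ := ih d (by omega)
        exact ⟨(if Even k then t else s) :: p, by rw [aw, hp]; rfl, by simp [hpl]; omega⟩
      · have : d = k + 1 := by omega
        subst this
        exact ⟨[], rfl, by simp⟩

lemma aw_last (s t : I) (d : ℕ) (hd : 1 ≤ d) :
    ∃ q : List I, aw s t d = q ++ [t] ∧ q.length = d - 1 := by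
  obtain ⟨q, hq, hql⟩ := aw_suffix s t d 1 hd
  exact ⟨q, by simpa [aw] using hq, hql⟩

/-- classification: an alternating word over `{s,t}` ending in `t` is `aw s t`. -/
lemma alt_eq_aw (s t : I) (hst : s ≠ t) : ∀ (m : List I), (∀ x ∈ m, x = s ∨ x = t) →
    m.Chain' (· ≠ ·) → m.getLast? = some t → m = aw s t m.length := by
  intro m
  induction m with
  | nil => intro _ _ h; simp at h
  | cons c m' ih =>
      intro hmem hch hlast
      cases m' with
      | nil =>
          simp only [List.getLast?_singleton, Option.some_inj] at hlast
          subst hlast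
          simp [aw]
      | cons d m'' =>
          have hch' := (List.isChain_cons_cons.1 hch).2
          have hcd : c ≠ d := (List.isChain_cons_cons.1 hch).1
          have hlast' : (d :: m'').getLast? = some t := by
            rwa [List.getLast?_cons_cons] at hlast
          have hmem' : ∀ x ∈ d :: m'', x = s ∨ x = t := fun x hx => hmem x (List.mem_cons_of_mem _ hx)
          have hm' := ih hmem' hch' hlast'
          have hd : d = (if Even m''.length then t else s) := by
            have : (d :: m'') = aw s t (m''.length + 1) := by
              simpa using hm'
            rw [aw] at this
            exact (List.cons.injEq _ _ _ _ ▸ this).1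
          have hc : c = (if Even (m''.length + 1) then t else s) := by
            rcases hmem c (by simp) with rfl | rfl
            · rcases Nat.even_or_odd m''.length with he | ho
              · simp [Nat.even_add_one, he]
              · exfalso; apply hcd; rw [hd, if_neg (Nat.not_even_iff_odd.2 ho)]
            · rcases Nat.even_or_odd m''.length with he | ho
              · exfalso; apply hcd; rw [hd, if_pos he]
              · simp [Nat.even_add_one, Nat.not_even_iff_odd.2 ho]
          have hm'' : d :: m'' = aw s t (m''.length + 1) := by simpa using hm'
          show c :: d :: m'' = aw s t (m''.length + 2)
          rw [aw, ← hc, ← hm'']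

/-- coordinates of the orbit of `coroot s` along alternating words -/
def pq (a b : ℤ) : ℕ → ℤ × ℤ
  | 0 => (1, 0)
  | (j+1) =>
      let z := pq a b j
      if Even j then (z.1, b * z.1 - z.2) else (a * z.2 - z.1, z.2)

lemma word_aw_apply (s t : I) (a b : ℤ)
    (has : rgs.α s (rgs.coroot t) = -(a:ℝ)) (hbt : rgs.α t (rgs.coroot s) = -(b:ℝ)) :
    ∀ k, rgs.word (aw s t k) (rgs.coroot s)
      = ((pq a b k).1 : ℝ) • rgs.coroot s + ((pq a b k).2 : ℝ) • rgs.coroot t := by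
  intro k
  induction k with
  | zero =>
      show rgs.word [] (rgs.coroot s) = _
      simp [pq]
  | succ k ih =>
      have hmul : ∀ (f g : V ≃ₗ[ℝ] V) (v : V), (f * g) v = f (g v) := fun _ _ _ => rfl
      rw [aw, word_cons]
      rw [hmul, ih]
      rcases Nat.even_or_odd k with he | ho
      · rw [if_pos he, pq, if_pos he]
        simp only [rgs.refl_apply, map_add, map_smul, smul_eq_mul, hbt, rgs.pairing_diag]
        push_cast
        match_scalars <;> ring
      · have hne := Nat.not_even_iff_odd.2 ho
        rw [if_neg hne, pq, if_neg hne]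
        simp only [rgs.refl_apply, map_add, map_smul, smul_eq_mul, has, rgs.pairing_diag]
        push_cast
        match_scalars <;> ring

lemma pq_nonneg_big (a b : ℤ) (ha : 1 ≤ a) (hb : 1 ≤ b) (h4 : 4 ≤ a * b) :
    ∀ k, 0 ≤ (pq a b k).1 ∧ 0 ≤ (pq a b k).2 := by
  have key : ∀ k, (k = 0 → pq a b k = (1, 0)) ∧
      (k ≠ 0 → 1 ≤ (pq a b k).1 ∧ 1 ≤ (pq a b k).2 ∧
        (Even k → a * (pq a b k).2 ≤ 2 * (pq a b k).1) ∧
        (¬ Even k → b * (pq a b k).1 ≤ 2 * (pq a b k).2)) := by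
    intro k
    induction k with
    | zero => exact ⟨fun _ => rfl, fun h => absurd rfl h⟩
    | succ k ih =>
        have hb0 : (0:ℤ) ≤ b := by linarith
        have ha0 : (0:ℤ) ≤ a := by linarith
        refine ⟨fun h => by omega, fun _ => ?_⟩
        rcases Nat.even_or_odd k with he | ho
        · rw [pq, if_pos he]
          rcases Nat.eq_zero_or_pos k with rfl | hk
          · have e1 : pq a b 0 = (1, 0) := rfl
            rw [e1]
            refine ⟨by norm_num, by simpa using hb, fun h => ?_, fun _ => by dsimp only; nlinarith⟩
            · simp [Nat.even_add_one] at h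
          · obtain ⟨h1, h2, h3, _⟩ := ih.2 (by omega)
            have h3' := h3 he
            have hkey : 2 * (pq a b k).2 ≤ b * (pq a b k).1 := by
              nlinarith [mul_le_mul_of_nonneg_left h3' hb0,
                mul_le_mul_of_nonneg_left h2 (show (0:ℤ) ≤ a*b - 4 by linarith)]
            refine ⟨h1, by dsimp only; linarith, fun h => ?_, fun _ => by dsimp only; linarith⟩
            · rw [Nat.even_add_one] at h; exact absurd he h
        · have hne := Nat.not_even_iff_odd.2 ho
          rw [pq, if_neg hne]
          obtain ⟨h1, h2, _, h4'⟩ := ih.2 (by intro h; subst h; exact hne Even.zero)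
          have h4'' := h4' hne
          have hkey : 2 * (pq a b k).1 ≤ a * (pq a b k).2 := by
            nlinarith [mul_le_mul_of_nonneg_left h4'' ha0,
              mul_le_mul_of_nonneg_left h1 (show (0:ℤ) ≤ a*b - 4 by linarith)]
          refine ⟨by dsimp only; linarith, h2, fun _ => by dsimp only; linarith, fun h => ?_⟩
          · rw [Nat.even_add_one] at h; exact absurd hne h
  intro k
  rcases Nat.eq_zero_or_pos k with rfl | hk
  · rw [(key 0).1 rfl]; norm_num
  · obtain ⟨h1, h2, _, _⟩ := (key k).2 (by omega)
    exact ⟨by omega, by omega⟩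

end RootGenSys

namespace RootGenSys
variable {I V : Type} [Fintype I] [AddCommGroup V] [Module ℝ V] (rgs : RootGenSys I V)

lemma aw_two (s t : I) : aw s t 2 = [s, t] := by
  simp [aw, Nat.even_add_one]
lemma aw_three (s t : I) : aw s t 3 = [t, s, t] := by
  simp [aw, Nat.even_add_one]
lemma aw_four (s t : I) : aw s t 4 = [s, t, s, t] := by
  simp [aw, Nat.even_add_one]
lemma aw_six (s t : I) : aw s t 6 = [s, t, s, t, s, t] := by
  simp [aw, Nat.even_add_one]

section Braid
variable (s t : I)

private lemma braid_ext {f g : V ≃ₗ[ℝ] V} (h : ∀ v, f v = g v) : f = g :=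
  LinearEquiv.toLinearMap_injective (LinearMap.ext h)

lemma braid00 (has : rgs.α s (rgs.coroot t) = 0) (hbt : rgs.α t (rgs.coroot s) = 0) :
    rgs.word (aw s t 2) = rgs.word (aw t s 2) := by
  rw [aw_two, aw_two]
  have hmul : ∀ (f g : V ≃ₗ[ℝ] V) (v : V), (f * g) v = f (g v) := fun _ _ _ => rfl
  refine braid_ext fun v => ?_
  simp only [word_cons, word_nil, mul_one, hmul, rgs.refl_apply, map_sub, map_smul,
    smul_eq_mul, has, hbt, rgs.pairing_diag]
  match_scalars <;> ring

lemma braid11 (has : rgs.α s (rgs.coroot t) = -1) (hbt : rgs.α t (rgs.coroot s) = -1) :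
    rgs.word (aw s t 3) = rgs.word (aw t s 3) := by
  rw [aw_three, aw_three]
  have hmul : ∀ (f g : V ≃ₗ[ℝ] V) (v : V), (f * g) v = f (g v) := fun _ _ _ => rfl
  refine braid_ext fun v => ?_
  simp only [word_cons, word_nil, mul_one, hmul, rgs.refl_apply, map_sub, map_smul,
    smul_eq_mul, has, hbt, rgs.pairing_diag]
  match_scalars <;> ring

lemma braid12 (has : rgs.α s (rgs.coroot t) = -1) (hbt : rgs.α t (rgs.coroot s) = -2) :
    rgs.word (aw s t 4) = rgs.word (aw t s 4) := by
  rw [aw_four, aw_four]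
  have hmul : ∀ (f g : V ≃ₗ[ℝ] V) (v : V), (f * g) v = f (g v) := fun _ _ _ => rfl
  refine braid_ext fun v => ?_
  simp only [word_cons, word_nil, mul_one, hmul, rgs.refl_apply, map_sub, map_smul,
    smul_eq_mul, has, hbt, rgs.pairing_diag]
  match_scalars <;> ring

lemma braid13 (has : rgs.α s (rgs.coroot t) = -1) (hbt : rgs.α t (rgs.coroot s) = -3) :
    rgs.word (aw s t 6) = rgs.word (aw t s 6) := by
  rw [aw_six, aw_six]
  have hmul : ∀ (f g : V ≃ₗ[ℝ] V) (v : V), (f * g) v = f (g v) := fun _ _ _ => rfl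
  refine braid_ext fun v => ?_
  simp only [word_cons, word_nil, mul_one, hmul, rgs.refl_apply, map_sub, map_smul,
    smul_eq_mul, has, hbt, rgs.pairing_diag]
  match_scalars <;> ring

end Braid

/-- main helper for alternating words ending in `t` -/
lemma awCase (s t : I) (hst : s ≠ t) (a b : ℤ)
    (has : rgs.α s (rgs.coroot t) = -(a:ℝ)) (hbt : rgs.α t (rgs.coroot s) = -(b:ℝ))
    (d : ℕ) (hd : 1 ≤ d)
    (hbraid : rgs.word (aw s t d) = rgs.word (aw t s d))
    (hnn : ∀ j, j < d → 0 ≤ (pq a b j).1 ∧ 0 ≤ (pq a b j).2)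
    (k : ℕ) :
    (∃ p q : ℝ, 0 ≤ p ∧ 0 ≤ q ∧
      rgs.word (aw s t k) (rgs.coroot s) = p • rgs.coroot s + q • rgs.coroot t)
    ∨ (∃ m₁ : List I, m₁.length < k ∧ rgs.word m₁ = rgs.word (aw s t k) * rgs.refl s) := by
  by_cases hk : k < d
  · left
    obtain ⟨h1, h2⟩ := hnn k hk
    exact ⟨((pq a b k).1 : ℝ), ((pq a b k).2 : ℝ), by exact_mod_cast h1, by exact_mod_cast h2,
      rgs.word_aw_apply s t a b has hbt k⟩
  · right
    push_neg at hk
    obtain ⟨p, hp, hpl⟩ := aw_suffix s t k d hk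
    obtain ⟨q, hq, hql⟩ := aw_last t s d hd
    refine ⟨p ++ q, by rw [List.length_append]; omega, ?_⟩
    have h1 : rgs.word (aw s t k) = rgs.word p * rgs.word (aw s t d) := by
      rw [hp, word_append]
    rw [h1, hbraid, hq, word_concat, word_append]
    rw [mul_assoc, mul_assoc, rgs.refl_mul_self, mul_one]

/-- extraction of an adjacent duplicate from a non-alternating word -/
lemma exists_dup : ∀ (m : List I), ¬ m.Chain' (· ≠ ·) →
    ∃ (l₁ : List I) (x : I) (l₂ : List I), m = l₁ ++ x :: x :: l₂ := by
  intro m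
  induction m with
  | nil => intro h; exact absurd List.isChain_nil h
  | cons c m' ih =>
      intro h
      cases m' with
      | nil => exact absurd (List.isChain_singleton c) h
      | cons d m'' =>
          rw [show List.Chain' (· ≠ ·) (c :: d :: m'') ↔ _ from List.isChain_cons_cons] at h
          push_neg at h
          by_cases hcd : c = d
          · subst hcd; exact ⟨[], c, m'', rfl⟩
          · obtain ⟨l₁, x, l₂, hl⟩ := ih (h hcd)
            exact ⟨c :: l₁, x, l₂, by rw [hl]; rfl⟩

/-- The rank-two dichotomy. -/
lemma rankTwo (s t : I) (hst : s ≠ t) : ∀ (n : ℕ) (m : List I), m.length = n →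
    (∀ x ∈ m, x = s ∨ x = t) →
    (∃ p q : ℝ, 0 ≤ p ∧ 0 ≤ q ∧
      rgs.word m (rgs.coroot s) = p • rgs.coroot s + q • rgs.coroot t)
    ∨ (∃ m₁ : List I, m₁.length < m.length ∧ rgs.word m₁ = rgs.word m * rgs.refl s) := by
  intro n
  induction n using Nat.strong_induction_on with
  | _ n ih =>
  intro m hlen hmem
  by_cases hch : m.Chain' (· ≠ ·)
  · rcases List.eq_nil_or_concat m with rfl | ⟨l', x, rfl⟩
    · left
      exact ⟨1, 0, by norm_num, le_refl _, by
        show rgs.word [] (rgs.coroot s) = _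
        simp⟩
    · rcases hmem x (by simp) with h | h
      · -- ends with s
        right
        refine ⟨l', by simp, ?_⟩
        rw [h, List.concat_eq_append, word_concat, mul_assoc, rgs.refl_mul_self, mul_one]
      · -- ends with t : alternating word ending in t
        rw [h] at hch hmem ⊢
        rw [List.concat_eq_append] at hch hmem ⊢
        have hm : l' ++ [t] = aw s t (l' ++ [t]).length := by
          refine alt_eq_aw s t hst _ hmem hch ?_
          simp
        set k := (l' ++ [t]).length with hkdef
        obtain ⟨a, haA⟩ : ∃ a : ℤ, -(rgs.c t s) = a := ⟨_, rfl⟩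
        obtain ⟨b, hbB⟩ : ∃ b : ℤ, -(rgs.c s t) = b := ⟨_, rfl⟩
        have hA0 : rgs.c t s ≤ 0 := rgs.cartan_offdiag t s (Ne.symm hst)
        have hB0 : rgs.c s t ≤ 0 := rgs.cartan_offdiag s t hst
        have has : rgs.α s (rgs.coroot t) = -(a : ℝ) := by
          rw [rgs.pairing t s, ← haA]; push_cast; ring
        have hbt : rgs.α t (rgs.coroot s) = -(b : ℝ) := by
          rw [rgs.pairing s t, ← hbB]; push_cast; ring
        have hab0 : (a = 0 ↔ b = 0) := by
          constructor
          · intro hh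
            have := (rgs.cartan_zero_iff t s).1 (by omega)
            omega
          · intro hh
            have := (rgs.cartan_zero_iff s t).1 (by omega)
            omega
        have key :
            (∃ p q : ℝ, 0 ≤ p ∧ 0 ≤ q ∧
              rgs.word (aw s t k) (rgs.coroot s) = p • rgs.coroot s + q • rgs.coroot t)
            ∨ (∃ m₁ : List I, m₁.length < k ∧
                rgs.word m₁ = rgs.word (aw s t k) * rgs.refl s) := by
          by_cases hbig : 4 ≤ a * b
          · have ha1 : 1 ≤ a := by
              rcases lt_or_ge a 1 with hlt | hge
              · exfalso
                have h0 : a = 0 := by omega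
                have hb' : b = 0 := hab0.1 h0
                rw [h0, hb'] at hbig; omega
              · exact hge
            have hb1 : 1 ≤ b := by
              rcases lt_or_ge b 1 with hlt | hge
              · exfalso
                have h0 : b = 0 := by omega
                have ha' : a = 0 := hab0.2 h0
                rw [h0, ha'] at hbig; omega
              · exact hge
            left
            obtain ⟨h1, h2⟩ := pq_nonneg_big a b ha1 hb1 hbig k
            exact ⟨((pq a b k).1 : ℝ), ((pq a b k).2 : ℝ), by exact_mod_cast h1,
              by exact_mod_cast h2, rgs.word_aw_apply s t a b has hbt k⟩
          · -- small cases
            push_neg at hbig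
            have ha0' : 0 ≤ a := by omega
            have hb0' : 0 ≤ b := by omega
            have ha3 : a ≤ 3 := by
              by_contra hcon
              push_neg at hcon
              have hb1 : 1 ≤ b := by
                rcases eq_or_lt_of_le hb0' with h0 | h1
                · exact absurd (hab0.2 h0.symm) (by omega)
                · omega
              nlinarith
            have hb3 : b ≤ 3 := by
              by_contra hcon
              push_neg at hcon
              have ha1 : 1 ≤ a := by
                rcases eq_or_lt_of_le ha0' with h0 | h1
                · exact absurd (hab0.1 h0.symm) (by omega)
                · omega
              nlinarith
            have hacase : a = 0 ∨ a = 1 ∨ a = 2 ∨ a = 3 := by omega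
            have hbcase : b = 0 ∨ b = 1 ∨ b = 2 ∨ b = 3 := by omega
            clear haA hbB
            rcases hacase with rfl | rfl | rfl | rfl <;>
              rcases hbcase with rfl | rfl | rfl | rfl <;>
              first
              | omega
              | (exact rgs.awCase s t hst 0 0 has hbt 2 (by norm_num)
                  (rgs.braid00 s t (by simpa using has) (by simpa using hbt))
                  (by intro j hj; interval_cases j <;> norm_num [pq, Nat.even_iff]) k)
              | (exact rgs.awCase s t hst 1 1 has hbt 3 (by norm_num)
                  (rgs.braid11 s t (by simpa using has) (by simpa using hbt))
                  (by intro j hj; interval_cases j <;> norm_num [pq, Nat.even_iff]) k)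
              | (exact rgs.awCase s t hst 1 2 has hbt 4 (by norm_num)
                  (rgs.braid12 s t (by simpa using has) (by simpa using hbt))
                  (by intro j hj; interval_cases j <;> norm_num [pq, Nat.even_iff]) k)
              | (exact rgs.awCase s t hst 2 1 has hbt 4 (by norm_num)
                  ((rgs.braid12 t s (by simpa using hbt) (by simpa using has)).symm)
                  (by intro j hj; interval_cases j <;> norm_num [pq, Nat.even_iff]) k)
              | (exact rgs.awCase s t hst 1 3 has hbt 6 (by norm_num)
                  (rgs.braid13 s t (by simpa using has) (by simpa using hbt))
                  (by intro j hj; interval_cases j <;> norm_num [pq, Nat.even_iff]) k)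
              | (exact rgs.awCase s t hst 3 1 has hbt 6 (by norm_num)
                  ((rgs.braid13 t s (by simpa using hbt) (by simpa using has)).symm)
                  (by intro j hj; interval_cases j <;> norm_num [pq, Nat.even_iff]) k)
        rw [hm, ← hkdef] at *
        exact key
  · obtain ⟨l₁, x, l₂, rfl⟩ := exists_dup _ hch
    have hw : rgs.word (l₁ ++ x :: x :: l₂) = rgs.word (l₁ ++ l₂) := by
      rw [word_append, word_append, word_cons, word_cons, ← mul_assoc (rgs.refl x),
        rgs.refl_mul_self, one_mul]
    have hlen2 : (l₁ ++ l₂).length < n := by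
      rw [← hlen]; simp
    have hmem2 : ∀ y ∈ l₁ ++ l₂, y = s ∨ y = t := by
      intro y hy
      rcases List.mem_append.1 hy with h | h
      · exact hmem y (List.mem_append.2 (Or.inl h))
      · exact hmem y (by simp [h])
    rcases ih _ hlen2 (l₁ ++ l₂) rfl hmem2 with ⟨p, q, hp, hq, heq⟩ | ⟨m₁, hm₁, heq⟩
    · left; exact ⟨p, q, hp, hq, by rw [hw]; exact heq⟩
    · right
      refine ⟨m₁, ?_, by rw [hw]; exact heq⟩
      have : (l₁ ++ x :: x :: l₂).length = l₁.length + l₂.length + 2 := by simp; omega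
      omega

end RootGenSys

namespace RootGenSys
variable {I V : Type} [Fintype I] [AddCommGroup V] [Module ℝ V] (rgs : RootGenSys I V)

/-- Key positivity theorem: if `len (w * refl s) > len w` then `w (coroot s)` is a
nonnegative combination of simple coroots. -/
theorem coroot_pos (n : ℕ) : ∀ (w : V ≃ₗ[ℝ] V), w ∈ rgs.weylGroup → rgs.len w = n →
    ∀ s : I, rgs.len w < rgs.len (w * rgs.refl s) → rgs.inQ (w (rgs.coroot s)) := by
  induction n using Nat.strong_induction_on with
  | _ n IH =>
  intro w hw hn s hws
  rcases Nat.eq_zero_or_pos n with rfl | hpos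
  · have hw1 : w = 1 := rgs.eq_one_of_len_eq_zero hw hn
    subst hw1
    simpa using rgs.inQ_coroot s
  · -- choose a reduced word, get its last letter t
    obtain ⟨l, hlw, hll⟩ := rgs.exists_reduced hw
    rcases List.eq_nil_or_concat l with rfl | ⟨l₁, t, rfl⟩
    · rw [hn] at hll; simp at hll; omega
    · rw [List.concat_eq_append] at hlw hll
      have hl₁len : l₁.length = n - 1 := by simp at hll; omega
      have hwt : w * rgs.refl t = rgs.word l₁ := by
        rw [← hlw, word_concat, mul_assoc, rgs.refl_mul_self, mul_one]
      have hlenwt : rgs.len (w * rgs.refl t) ≤ n - 1 := by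
        rw [hwt]
        calc rgs.len (rgs.word l₁) ≤ l₁.length := rgs.len_le l₁
          _ = n - 1 := hl₁len
      have hts : t ≠ s := by
        rintro rfl
        have : rgs.len (w * rgs.refl t) < rgs.len w := by omega
        omega
      -- minimal decomposition w = v * word m with m a word in {s, t}
      classical
      let P : ℕ → Prop := fun N => ∃ (v : V ≃ₗ[ℝ] V) (m : List I), v ∈ rgs.weylGroup ∧
        (∀ x ∈ m, x = s ∨ x = t) ∧ w = v * rgs.word m ∧ rgs.len v + m.length = N
      have hPw : P n := ⟨w, [], hw, by simp, by simp [word], by simpa using hn⟩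
      have hPne : {N | P N}.Nonempty := ⟨n, hPw⟩
      set M := sInf {N | P N} with hM
      have hMmem : P M := Nat.sInf_mem hPne
      have hMle : M ≤ n := Nat.sInf_le hPw
      -- all decompositions have value ≥ len w = n
      have hval : ∀ N, P N → n ≤ N := by
        rintro N ⟨v, m, hv, hm, hwvm, hN⟩
        have := rgs.len_mul_word_le hv m
        rw [← hwvm, hn] at this
        omega
      have hMn : M = n := le_antisymm hMle (hval M hMmem)
      -- second minimization: minimal len v among value-M decompositions
      let P2 : ℕ → Prop := fun K => ∃ (v : V ≃ₗ[ℝ] V) (m : List I), v ∈ rgs.weylGroup ∧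
        (∀ x ∈ m, x = s ∨ x = t) ∧ w = v * rgs.word m ∧ rgs.len v + m.length = M ∧
        rgs.len v = K
      have hP2ne : {K | P2 K}.Nonempty := by
        obtain ⟨v, m, hv, hm, hwvm, hN⟩ := hMmem
        exact ⟨rgs.len v, v, m, hv, hm, hwvm, hN, rfl⟩
      set K := sInf {K | P2 K} with hK
      obtain ⟨v, m, hv, hm, hwvm, hvmM, hvK⟩ := Nat.sInf_mem hP2ne
      have hKle : ∀ K', P2 K' → K ≤ K' := fun K' h => Nat.sInf_le h
      -- len v ≤ n - 1, via the decomposition (w * refl t, [t])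
      have hKlt : rgs.len v < n := by
        have hP2wt : P2 (rgs.len (w * rgs.refl t)) := by
          refine ⟨w * rgs.refl t, [t], Subgroup.mul_mem _ hw (rgs.refl_mem t), by simp, ?_, ?_, rfl⟩
          · rw [mul_assoc]
            have : rgs.word [t] = rgs.refl t := by simp [word]
            rw [this, rgs.refl_mul_self, mul_one]
          · have h1 : n ≤ rgs.len (w * rgs.refl t) + 1 := by
              have := rgs.len_mul_word_le (Subgroup.mul_mem _ hw (rgs.refl_mem t)) [t]
              have h2 : w * rgs.refl t * rgs.word [t] = w := by
                rw [mul_assoc]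
                have : rgs.word [t] = rgs.refl t := by simp [word]
                rw [this, rgs.refl_mul_self, mul_one]
              rw [h2, hn] at this
              simpa using this
            have h2 : rgs.len (w * rgs.refl t) = n - 1 := by omega
            rw [h2, hMn]
            simp
            omega
        have := hKle _ hP2wt
        rw [hvK]
        omega
      -- minimality: len (v * refl s) > len v and len (v * refl t) > len v
      have hvs : ∀ u : I, u = s ∨ u = t → rgs.len v < rgs.len (v * rgs.refl u) := by
        intro u hu
        rcases lt_trichotomy (rgs.len (v * rgs.refl u)) (rgs.len v) with hlt | heq | hgt
        · exfalso
          have hP2' : P2 (rgs.len (v * rgs.refl u)) := by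
            refine ⟨v * rgs.refl u, u :: m, Subgroup.mul_mem _ hv (rgs.refl_mem u), ?_, ?_, ?_, rfl⟩
            · intro x hx
              rcases List.mem_cons.1 hx with rfl | hx'
              · exact hu
              · exact hm x hx'
            · rw [word_cons, ← mul_assoc, mul_assoc v, rgs.refl_mul_self, mul_one]
              exact hwvm
            · have hub : rgs.len (v * rgs.refl u) + (u :: m).length ≤ M := by
                simp only [List.length_cons]
                omega
              have hlb : M ≤ rgs.len (v * rgs.refl u) + (u :: m).length := by
                apply Nat.sInf_le
                refine ⟨v * rgs.refl u, u :: m, Subgroup.mul_mem _ hv (rgs.refl_mem u), ?_, ?_, rfl⟩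
                · intro x hx
                  rcases List.mem_cons.1 hx with rfl | hx'
                  · exact hu
                  · exact hm x hx'
                · rw [word_cons, ← mul_assoc, mul_assoc v, rgs.refl_mul_self, mul_one]
                  exact hwvm
              omega
          have := hKle _ hP2'
          omega
        · exact absurd heq (rgs.len_mul_refl_ne hv u)
        · exact hgt
      -- positivity for v
      have hvQs : rgs.inQ (v (rgs.coroot s)) :=
        IH (rgs.len v) (by omega) v hv rfl s (hvs s (Or.inl rfl))
      have hvQt : rgs.inQ (v (rgs.coroot t)) :=
        IH (rgs.len v) (by omega) v hv rfl t (hvs t (Or.inr rfl))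
      -- rank-two dichotomy for m
      rcases rgs.rankTwo s t (Ne.symm hts) m.length m rfl hm with
        ⟨p, q, hp, hq, heq⟩ | ⟨m₁, hm₁len, hm₁eq⟩
      · -- positive case
        have : w (rgs.coroot s) = p • v (rgs.coroot s) + q • v (rgs.coroot t) := by
          have hmul : ∀ (f g : V ≃ₗ[ℝ] V) (x : V), (f * g) x = f (g x) := fun _ _ _ => rfl
          rw [hwvm, hmul, heq]
          simp [map_add, map_smul]
        rw [this]
        exact rgs.inQ_comb hp hq hvQs hvQt
      · -- contradiction with len (w * refl s) > len w
        exfalso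
        have hws' : w * rgs.refl s = v * rgs.word m₁ := by
          rw [hwvm, mul_assoc, ← hm₁eq]
        have : rgs.len (w * rgs.refl s) ≤ rgs.len v + m₁.length := by
          rw [hws']
          exact rgs.len_mul_word_le hv m₁
        omega

end RootGenSys

namespace RootGenSys
variable {I V : Type} [Fintype I] [AddCommGroup V] [Module ℝ V] (rgs : RootGenSys I V)

lemma inQ_sum {s : Finset ℕ} {f : ℕ → V} (h : ∀ i ∈ s, rgs.inQ (f i)) :
    rgs.inQ (∑ i ∈ s, f i) := by
  classical
  induction s using Finset.induction_on with
  | empty => simpa using rgs.inQ_zero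
  | insert a s hx ih =>
      rw [Finset.sum_insert hx]
      exact rgs.inQ_add (h _ (Finset.mem_insert_self _ _))
        (ih fun i hi => h i (Finset.mem_insert_of_mem hi))

/-- if `ν` is dominant and `w ∈ W^v` then `ν - w ν ∈ Q^∨_{ℝ+}`. -/
theorem dominant_sub_weyl (n : ℕ) : ∀ (w : V ≃ₗ[ℝ] V), w ∈ rgs.weylGroup → rgs.len w = n →
    ∀ ν : V, (∀ i, 0 ≤ rgs.α i ν) → rgs.inQ (ν - w ν) := by
  induction n using Nat.strong_induction_on with
  | _ n IH =>
  intro w hw hn ν hν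
  rcases Nat.eq_zero_or_pos n with rfl | hpos
  · have hw1 : w = 1 := rgs.eq_one_of_len_eq_zero hw hn
    subst hw1
    simpa using rgs.inQ_zero
  · obtain ⟨l, hlw, hll⟩ := rgs.exists_reduced hw
    rcases List.eq_nil_or_concat l with rfl | ⟨l₁, i, rfl⟩
    · rw [hn] at hll; simp at hll; omega
    · rw [List.concat_eq_append] at hlw hll
      have hl₁len : l₁.length = n - 1 := by simp at hll; omega
      set v := rgs.word l₁ with hv
      have hvW : v ∈ rgs.weylGroup := rgs.word_mem l₁
      have hvlen : rgs.len v = n - 1 := by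
        have h1 : rgs.len v ≤ n - 1 := hl₁len ▸ rgs.len_le l₁
        have h2 : n ≤ rgs.len v + 1 := by
          have := rgs.len_mul_word_le hvW [i]
          have hsing : rgs.word [i] = rgs.refl i := by
            show (List.map rgs.refl [i]).prod = rgs.refl i
            simp
          have heq : v * rgs.word [i] = w := by
            rw [hv, hsing, ← word_concat, hlw]
          rw [heq, hn] at this
          simpa using this
        omega
      have hwvi : w = v * rgs.refl i := by rw [← hlw, word_concat]
      -- w ν = v ν - α i ν • v (coroot i)
      have hmul : ∀ (f g : V ≃ₗ[ℝ] V) (x : V), (f * g) x = f (g x) := fun _ _ _ => rfl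
      have hstep : ν - w ν = (ν - v ν) + (rgs.α i ν) • (v (rgs.coroot i)) := by
        rw [hwvi, hmul, rgs.refl_apply]
        simp only [map_sub, map_smul]
        abel
      rw [hstep]
      refine rgs.inQ_add ?_ (rgs.inQ_smul (hν i) ?_)
      · exact IH (n - 1) (by omega) v hvW hvlen ν hν
      · refine rgs.coroot_pos (n-1) v hvW hvlen i ?_
        rw [← hwvi, hn, hvlen]
        omega

end RootGenSys


/-- If there is a Hecke path `π` (of shape `T • ν` with respect to `-C_f^v`, where
`T ≥ 0` and `ν ∈ Y^{++} = Y ∩ C̄_f^v`) from `a` to `a + T • ν - μ`, then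
`μ ∈ Q^∨_{ℝ+} = Σ_{i ∈ I} ℝ_{≥0} (coroot i)`. -/
theorem heckePath_defect_mem_QveeRplus {I V : Type} [Fintype I]
    [AddCommGroup V] [Module ℝ V] (rgs : RootGenSys I V)
    (T : ℝ) (hT : 0 ≤ T) (μ a ν : V)
    (hνY : ν ∈ rgs.Y) (hνC : ∀ i, 0 ≤ rgs.α i ν)
    (π : ℝ → V) (hπ : rgs.IsHeckePath (T • ν) π)
    (h0 : π 0 = a) (h1 : π 1 = a + T • ν - μ) :
    ∃ x : I → ℝ, (∀ i, 0 ≤ x i) ∧ μ = ∑ i, x i • rgs.coroot i := by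
  classical
  obtain ⟨n, t, v, hmono, ht0, ht1, hseg, horb, _⟩ := hπ
  -- telescoping
  have hstep : ∀ i : Fin n, π (t i.succ) = π (t i.castSucc) +
      (t i.succ - t i.castSucc) • v i := by
    intro i
    exact hseg i (t i.succ) ⟨le_of_lt (hmono (show i.castSucc < i.succ from Fin.castSucc_lt_succ)), le_refl _⟩
  set F : ℕ → V := fun k => if h : k < n + 1 then π (t ⟨k, h⟩) else 0 with hF
  set D : ℕ → ℝ := fun k => if h : k < n + 1 then t ⟨k, h⟩ else 0 with hD
  set G : ℕ → V := fun k => if h : k < n then v ⟨k, h⟩ else 0 with hG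
  have hFstep : ∀ k, k < n → F (k+1) - F k = (D (k+1) - D k) • G k := by
    intro k hk
    have h1 : k < n + 1 := by omega
    have h2 : k + 1 < n + 1 := by omega
    have hc : (⟨k, hk⟩ : Fin n).castSucc = ⟨k, h1⟩ := rfl
    have hs : (⟨k, hk⟩ : Fin n).succ = ⟨k+1, h2⟩ := rfl
    simp only [hF, hD, hG, dif_pos h1, dif_pos h2, dif_pos hk]
    have := hstep ⟨k, hk⟩
    rw [hc, hs] at this
    rw [this]
    abel
  have htel : π 1 - π 0 = ∑ k ∈ Finset.range n, (F (k+1) - F k) := by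
    rw [Finset.sum_range_sub F]
    simp only [hF]
    rw [dif_pos (by omega : n < n + 1), dif_pos (by omega : 0 < n + 1)]
    have he0 : (⟨0, by omega⟩ : Fin (n+1)) = 0 := rfl
    have hen : (⟨n, by omega⟩ : Fin (n+1)) = Fin.last n := rfl
    rw [he0, hen, ht0, ht1]
  have htel2 : (1 : ℝ) - 0 = ∑ k ∈ Finset.range n, (D (k+1) - D k) := by
    rw [Finset.sum_range_sub D]
    simp only [hD]
    rw [dif_pos (by omega : n < n + 1), dif_pos (by omega : 0 < n + 1)]
    have he0 : (⟨0, by omega⟩ : Fin (n+1)) = 0 := rfl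
    have hen : (⟨n, by omega⟩ : Fin (n+1)) = Fin.last n := rfl
    rw [he0, hen, ht0, ht1]
  have hDpos : ∀ k, k < n → 0 ≤ D (k+1) - D k := by
    intro k hk
    have h1 : k < n + 1 := by omega
    have h2 : k + 1 < n + 1 := by omega
    simp only [hD, dif_pos h1, dif_pos h2]
    have hlt : (⟨k, h1⟩ : Fin (n+1)) < ⟨k+1, h2⟩ := by simp [Fin.lt_def]
    exact le_of_lt (sub_pos.2 (hmono hlt))
  have hμ : μ = ∑ k ∈ Finset.range n, (D (k+1) - D k) • (T • ν - G k) := by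
    have e1 : ∑ k ∈ Finset.range n, (D (k+1) - D k) • (T • ν - G k)
        = (∑ k ∈ Finset.range n, (D (k+1) - D k)) • (T • ν)
          - ∑ k ∈ Finset.range n, (D (k+1) - D k) • G k := by
      have hsplit : ∀ k ∈ Finset.range n, (D (k+1) - D k) • (T • ν - G k)
          = (D (k+1) - D k) • (T • ν) - (D (k+1) - D k) • G k := fun k _ => smul_sub _ _ _
      rw [Finset.sum_congr rfl hsplit, Finset.sum_sub_distrib, Finset.sum_smul]
    have e2 : ∑ k ∈ Finset.range n, (D (k+1) - D k) • G k = π 1 - π 0 := by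
      rw [htel]
      exact Finset.sum_congr rfl fun k hk => (hFstep k (Finset.mem_range.1 hk)).symm
    have e3 : (∑ k ∈ Finset.range n, (D (k+1) - D k)) = 1 := by
      rw [← htel2]; ring
    rw [e1, e2, e3, one_smul, h0, h1]
    abel
  rw [hμ]
  have hQ : rgs.inQ (∑ k ∈ Finset.range n, (D (k+1) - D k) • (T • ν - G k)) := by
    apply rgs.inQ_sum
    intro k hk
    have hkn : k < n := Finset.mem_range.1 hk
    apply rgs.inQ_smul (hDpos k hkn)
    obtain ⟨w, hwW, hveq⟩ := horb ⟨k, hkn⟩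
    have hGk : G k = w (T • ν) := by
      simp only [hG, dif_pos hkn]
      exact hveq
    rw [hGk]
    exact rgs.dominant_sub_weyl (rgs.len w) w hwW rfl (T • ν)
      (fun i => by rw [map_smul]; exact mul_nonneg hT (hνC i))
  exact hQ
end
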